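/- A topological dynamical system with the shadowing property has uniform positive entropy if and only if it has completely positive entropy. -/

import Mathlib

open scoped Classical

/-- The lower density of a set `I ⊆ ℕ`. -/
noncomputable def lowerDensity (I : Set ℕ) : ℝ :=
  Filter.liminf (fun n => (((Finset.range n).filter (fun k => k ∈ I)).card : ℝ) / n)
    Filter.atTop

/-- `I ⊆ ℕ` is an independence set for the pair `(A₁, A₂)`: for every finite `J ⊆ I` and
every choice `f` of one of the two sets for each index, `⋂_{j ∈ J} T^{-j}(A_{f j}) ≠ ∅`. -/
def IsIndepSet {X : Type*} (T : X → X) (A₁ A₂ : Set X) (I : Set ℕ) : Prop :=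
  ∀ J : Finset ℕ, ↑J ⊆ I → ∀ f : ℕ → Bool,
    ∃ x : X, ∀ j ∈ J, T^[j] x ∈ (if f j then A₁ else A₂)

/-- `(x₁, x₂)` is an IE-pair of `(X, T)`: every pair of open neighborhoods admits an
independence set of positive lower density. -/
def IEPair {X : Type*} [TopologicalSpace X] (T : X → X) (p : X × X) : Prop :=
  ∀ A₁ A₂ : Set X, IsOpen A₁ → IsOpen A₂ → p.1 ∈ A₁ → p.2 ∈ A₂ →
    ∃ I : Set ℕ, IsIndepSet T A₁ A₂ I ∧ 0 < lowerDensity I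

/-- The transitive closure `F⁺`. -/
def plusSet {Z : Type*} (F : Set (Z × Z)) : Set (Z × Z) :=
  {p | Relation.TransGen (fun u v => (u, v) ∈ F) p.1 p.2}

/-- The shadowing property. -/
def HasShadowing {X : Type*} [MetricSpace X] (T : X → X) : Prop :=
  ∀ ε > (0 : ℝ), ∃ δ > (0 : ℝ), ∀ x : ℕ → X,
    (∀ n, dist (T (x n)) (x (n + 1)) ≤ δ) →
    ∃ y : X, ∀ n, dist (x n) (T^[n] y) ≤ ε

/-- `Γ(E) = closure (E⁺ ∪ Δ_X)`. -/
def GammaStep {X : Type*} [TopologicalSpace X] (E : Set (X × X)) : Set (X × X) :=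
  closure (plusSet E ∪ Set.diagonal X)

/-- Transfinite iteration of `Γ`. -/
noncomputable def GammaIter {X : Type*} [TopologicalSpace X] (E : Set (X × X)) (o : Ordinal.{0}) :
    Set (X × X) :=
  Ordinal.limitRecOn o E (fun _ ih => GammaStep ih)
    (fun o _ ih => closure (⋃ b : {b : Ordinal // b < o}, ih b.1 b.2))

/-- `(X,T)` has uniform positive entropy: every pair is an IE-pair. -/
def HasUPE {X : Type*} [TopologicalSpace X] (T : X → X) : Prop :=
  {p : X × X | IEPair T p} = Set.univ

/-- `(X,T)` has completely positive entropy: `Γ^α(E(X,T)) = X²` for some countable ordinal. -/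
def HasCPE {X : Type*} [TopologicalSpace X] (T : X → X) : Prop :=
  ∃ α : Ordinal.{0}, α.card ≤ Cardinal.aleph0 ∧
    GammaIter {p : X × X | IEPair T p} α = Set.univ

/-!
UPE gives CPE with `α = 0`. Conversely, shadowing makes IE-pairs transitive: if `(x, y)` and
`(y, z)` are IE-pairs, two elements of each independence set give orbit pieces of fixed lengths
moving between small balls around `x`, `y` and around `y`, `z`. Detouring through the ball
around `y`, any two of the balls around `x` and `z` are joined by pseudo-orbits of one common
length `p`, so every word in `{x, z}` is followed at the multiples of `p` by a pseudo-orbit, and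
the orbit shadowing it makes `pℕ` an independence set. The set `E` of IE-pairs is also closed,
so `E ∪ Δ` is a closed transitive relation containing every `Γ^α(E)`; CPE thus forces
`E ∪ Δ = X²`, and diagonal pairs are IE-pairs because off-diagonal ones are (or because `T` fixes
the point of a one-point space).
-/

open Function Metric Set Filter

lemma le_lowerDensity {I : Set ℕ} {c : ℝ}
    (h : ∀ᶠ n in atTop, c ≤ (((Finset.range n).filter (· ∈ I)).card : ℝ) / n) :
    c ≤ lowerDensity I := by
  have hle : ∀ n : ℕ, (((Finset.range n).filter (· ∈ I)).card : ℝ) / n ≤ 1 := fun n =>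
    div_le_one_of_le₀
      (by exact_mod_cast (Finset.card_filter_le _ _).trans (Finset.card_range n).le) n.cast_nonneg
  exact le_liminf_of_le (isBoundedUnder_of ⟨1, hle⟩).isCoboundedUnder_ge h

lemma lowerDensity_univ : lowerDensity univ = 1 := by
  refine Tendsto.liminf_eq (tendsto_const_nhds.congr' ?_)
  filter_upwards [eventually_gt_atTop 0] with n hn
  simp [hn.ne']

lemma nontrivial_of_lowerDensity_pos {I : Set ℕ} (h : 0 < lowerDensity I) : I.Nontrivial := by
  by_contra hI
  have hcard : ∀ n, ((Finset.range n).filter (· ∈ I)).card ≤ 1 := fun n =>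
    Finset.card_le_one.mpr fun a ha b hb =>
      not_nontrivial_iff.mp hI (Finset.mem_filter.mp ha).2 (Finset.mem_filter.mp hb).2
  have hlim : Tendsto (fun n : ℕ => (((Finset.range n).filter (· ∈ I)).card : ℝ) / n)
      atTop (nhds 0) :=
    squeeze_zero (fun n => by positivity)
      (fun n => div_le_div_of_nonneg_right (by exact_mod_cast hcard n) n.cast_nonneg)
      tendsto_one_div_atTop_nhds_zero_nat
  exact h.ne' hlim.liminf_eq

lemma one_div_le_lowerDensity_setOf_dvd {p : ℕ} (hp : 0 < p) :
    1 / (p : ℝ) ≤ lowerDensity {k | p ∣ k} := by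
  refine le_lowerDensity ((eventually_gt_atTop 0).mono fun n hn => ?_)
  have hcount : n ≤ ((Finset.range n).filter (· ∈ {k | p ∣ k})).card * p := by
    calc n = (Finset.range n).card := (Finset.card_range n).symm
      _ ≤ ((Finset.range n).filter (· ∈ {k | p ∣ k}) ×ˢ Finset.range p).card := by
        refine Finset.card_le_card_of_injOn (fun k => (p * (k / p), k % p)) (fun k hk => ?_) ?_
        · simp only [Finset.coe_range, mem_Iio] at hk
          simp [(Nat.mul_div_le k p).trans_lt hk, Nat.mod_lt k hp]
        · intro a _ b _ hab
          simp only [Prod.mk.injEq] at hab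
          rw [← Nat.div_add_mod a p, ← Nat.div_add_mod b p, hab.1, hab.2]
      _ = _ := by rw [Finset.card_product, Finset.card_range]
  rw [div_le_div_iff₀ (by positivity) (by positivity), one_mul]
  norm_cast
  convert hcount

section IEPair

variable {X : Type*} [TopologicalSpace X] {T : X → X}

lemma isClosed_setOf_iePair (T : X → X) : IsClosed {p : X × X | IEPair T p} := by
  refine isClosed_of_closure_subset fun p hp A₁ A₂ h₁ h₂ hp₁ hp₂ => ?_
  obtain ⟨q, ⟨hq₁, hq₂⟩, hq⟩ := mem_closure_iff.mp hp _ (h₁.prod h₂) ⟨hp₁, hp₂⟩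
  exact hq A₁ A₂ h₁ h₂ hq₁ hq₂

lemma IEPair.self_left {x y : X} (h : IEPair T (x, y)) : IEPair T (x, x) := by
  intro A₁ A₂ h₁ h₂ hx₁ hx₂
  obtain ⟨I, hI, hdens⟩ := h (A₁ ∩ A₂) univ (h₁.inter h₂) isOpen_univ ⟨hx₁, hx₂⟩ trivial
  refine ⟨I, fun J hJ f => ?_, hdens⟩
  obtain ⟨w, hw⟩ := hI J hJ fun _ => true
  exact ⟨w, fun j hj => by cases f j <;> simp [(hw j hj).1, (hw j hj).2]⟩

lemma iePair_self_of_isFixedPt {x : X} (hx : IsFixedPt T x) : IEPair T (x, x) := by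
  refine fun A₁ A₂ _ _ h₁ h₂ => ⟨univ, fun J _ f => ⟨x, fun j _ => ?_⟩, ?_⟩
  · rw [(hx.iterate j).eq]
    split <;> assumption
  · rw [lowerDensity_univ]
    exact one_pos

lemma IEPair.exists_nonempty_inter_preimage {x y : X} (h : IEPair T (x, y)) {A B : Set X}
    (hA : IsOpen A) (hB : IsOpen B) (hx : x ∈ A) (hy : y ∈ B) :
    ∃ n, ∀ s e : Bool,
      ((if s then A else B) ∩ T^[n + 1] ⁻¹' (if e then A else B)).Nonempty := by
  obtain ⟨I, hI, hdens⟩ := h A B hA hB hx hy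
  obtain ⟨c, hc, d, hd, hcd⟩ := (nontrivial_of_lowerDensity_pos hdens).exists_lt
  refine ⟨d - c - 1, fun s e => ?_⟩
  obtain ⟨w, hw⟩ := hI {c, d} (by simp [insert_subset_iff, hc, hd])
    fun k => if k = c then s else e
  refine ⟨T^[c] w, by simpa using hw c (by simp), ?_⟩
  rw [mem_preimage, ← iterate_add_apply, show d - c - 1 + 1 + c = d by omega]
  simpa [hcd.ne'] using hw d (by simp)

end IEPair

section PseudoOrbit

variable {X : Type*} [PseudoMetricSpace X] {T : X → X} {δ : ℝ} {L L₁ L₂ : ℕ} {P Q R : Set X}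

/-- Asking for `T (σ L) ∈ Q` rather than `σ L ∈ Q` lets segments be glued at sets of diameter
`≤ δ` without increasing `δ`. -/
def PseudoOrbitSeg (T : X → X) (δ : ℝ) (L : ℕ) (P Q : Set X) : Prop :=
  ∃ σ : ℕ → X, σ 0 ∈ P ∧ T (σ L) ∈ Q ∧ ∀ t < L, dist (T (σ t)) (σ (t + 1)) ≤ δ

lemma pseudoOrbitSeg_of_nonempty (hδ : 0 ≤ δ) (h : (P ∩ T^[L + 1] ⁻¹' Q).Nonempty) :
    PseudoOrbitSeg T δ L P Q := by
  obtain ⟨u, hu, huQ⟩ := h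
  refine ⟨fun t => T^[t] u, hu, ?_, fun t _ => ?_⟩
  · rwa [mem_preimage, iterate_succ_apply'] at huQ
  · simpa only [← iterate_succ_apply' T, dist_self] using hδ

lemma PseudoOrbitSeg.trans (h₁ : PseudoOrbitSeg T δ L₁ P Q)
    (hQ : ∀ a ∈ Q, ∀ b ∈ Q, dist a b ≤ δ) (h₂ : PseudoOrbitSeg T δ L₂ Q R) :
    PseudoOrbitSeg T δ (L₁ + 1 + L₂) P R := by
  obtain ⟨σ₁, hσ₁P, hσ₁Q, hσ₁⟩ := h₁
  obtain ⟨σ₂, hσ₂Q, hσ₂R, hσ₂⟩ := h₂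
  refine ⟨fun t => if t ≤ L₁ then σ₁ t else σ₂ (t - (L₁ + 1)), by simpa using hσ₁P, ?_,
    fun t ht => ?_⟩
  · simpa [show ¬L₁ + 1 + L₂ ≤ L₁ by omega, show L₁ + 1 + L₂ - (L₁ + 1) = L₂ by omega]
      using hσ₂R
  · rcases lt_trichotomy t L₁ with h | rfl | h
    · simpa [h.le, Nat.succ_le_of_lt h] using hσ₁ t h
    · simpa using hQ _ hσ₁Q _ hσ₂Q
    · simpa [h.not_ge, show ¬t < L₁ by omega, show t + 1 - (L₁ + 1) = t - (L₁ + 1) + 1 by omega]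
        using hσ₂ (t - (L₁ + 1)) (by omega)

lemma exists_pseudoOrbit_of_pseudoOrbitSeg {ι : Type*} {U : ι → Set X}
    (hU : ∀ i, ∀ a ∈ U i, ∀ b ∈ U i, dist a b ≤ δ) (h : ∀ i j, PseudoOrbitSeg T δ L (U i) (U j))
    (f : ℕ → ι) :
    ∃ x : ℕ → X, (∀ t, dist (T (x t)) (x (t + 1)) ≤ δ) ∧ ∀ k, x ((L + 1) * k) ∈ U (f k) := by
  choose σ hσ₀ hσL hσ using fun k => h (f k) (f (k + 1))
  set x : ℕ → X := fun t => σ (t / (L + 1)) (t % (L + 1))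
  have hx : ∀ k r, r ≤ L → x ((L + 1) * k + r) = σ k r := fun k r hr => by
    simp only [x, Nat.mul_add_div L.succ_pos, Nat.mul_add_mod,
      Nat.div_eq_of_lt (Nat.lt_succ_of_le hr), Nat.mod_eq_of_lt (Nat.lt_succ_of_le hr), add_zero]
  refine ⟨x, fun t => ?_, fun k => by simpa [← hx k 0 L.zero_le] using hσ₀ k⟩
  obtain ⟨k, r, hr, rfl⟩ : ∃ k r, r ≤ L ∧ t = (L + 1) * k + r :=
    ⟨t / (L + 1), t % (L + 1), Nat.lt_succ_iff.mp (Nat.mod_lt _ L.succ_pos),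
      (Nat.div_add_mod t (L + 1)).symm⟩
  rcases hr.lt_or_eq with hr | hr
  · rw [hx k r hr.le, add_assoc, hx k (r + 1) hr]
    exact hσ k r hr
  · rw [hx k r hr.le, show (L + 1) * k + r + 1 = (L + 1) * (k + 1) + 0 by rw [hr]; ring,
      hx (k + 1) 0 L.zero_le]
    exact hU _ _ (hr ▸ hσL k) _ (hσ₀ (k + 1))

/-- Going out of `U s`, looping in `V` for the return times of `U (!s)` and `U (!s')`, and
entering `U s'` takes `ℓ s + ℓ (!s) + ℓ (!s') + ℓ s'` steps, which does not depend on `s, s'`. -/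
lemma pseudoOrbitSeg_of_detour {U : Bool → Set X} {V : Set X} (ℓ : Bool → ℕ) (hδ : 0 ≤ δ)
    (hV : ∀ a ∈ V, ∀ b ∈ V, dist a b ≤ δ) (hout : ∀ s, (U s ∩ T^[ℓ s + 1] ⁻¹' V).Nonempty)
    (hloop : ∀ s, (V ∩ T^[ℓ s + 1] ⁻¹' V).Nonempty)
    (hin : ∀ s, (V ∩ T^[ℓ s + 1] ⁻¹' U s).Nonempty) (s s' : Bool) :
    PseudoOrbitSeg T δ (2 * (ℓ true + ℓ false) + 3) (U s) (U s') := by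
  have hseg := (pseudoOrbitSeg_of_nonempty hδ (hout s)).trans hV <|
    (pseudoOrbitSeg_of_nonempty hδ (hloop !s)).trans hV <|
    (pseudoOrbitSeg_of_nonempty hδ (hloop !s')).trans hV (pseudoOrbitSeg_of_nonempty hδ (hin s'))
  convert hseg using 1
  cases s <;> cases s' <;> simp only [Bool.not_true, Bool.not_false] <;> omega

lemma isIndepSet_setOf_dvd {ε : ℝ} {U : Bool → Set X} {A₁ A₂ : Set X}
    (hsh : ∀ x : ℕ → X, (∀ n, dist (T (x n)) (x (n + 1)) ≤ δ) →
      ∃ y : X, ∀ n, dist (x n) (T^[n] y) ≤ ε)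
    (hU : ∀ s, ∀ a ∈ U s, ∀ b ∈ U s, dist a b ≤ δ)
    (hseg : ∀ s s', PseudoOrbitSeg T δ L (U s) (U s'))
    (hA : ∀ s, ∀ a ∈ U s, closedBall a ε ⊆ if s then A₁ else A₂) :
    IsIndepSet T A₁ A₂ {k | L + 1 ∣ k} := by
  intro J hJ f
  obtain ⟨x, hxδ, hxU⟩ := exists_pseudoOrbit_of_pseudoOrbitSeg hU hseg fun k => f ((L + 1) * k)
  obtain ⟨y, hy⟩ := hsh x hxδ
  refine ⟨y, fun j hj => ?_⟩
  obtain ⟨k, rfl⟩ := hJ hj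
  exact hA _ _ (hxU k) (mem_closedBall'.mpr (hy _))

end PseudoOrbit

theorem IEPair.trans_of_hasShadowing {X : Type*} [MetricSpace X] {T : X → X}
    (hshad : HasShadowing T) {x y z : X} (hxy : IEPair T (x, y)) (hyz : IEPair T (y, z)) :
    IEPair T (x, z) := by
  intro A C hA hC hxA hzC
  obtain ⟨ε, hε, hAx, hCz⟩ : ∃ ε > 0, ball x (2 * ε) ⊆ A ∧ ball z (2 * ε) ⊆ C := by
    obtain ⟨εA, hεA, hAx⟩ := Metric.isOpen_iff.mp hA x hxA
    obtain ⟨εC, hεC, hCz⟩ := Metric.isOpen_iff.mp hC z hzC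
    refine ⟨min εA εC / 2, by positivity, ?_, ?_⟩
    · exact (ball_subset_ball (by linarith [min_le_left εA εC])).trans hAx
    · exact (ball_subset_ball (by linarith [min_le_right εA εC])).trans hCz
  obtain ⟨δ, hδ, hsh⟩ := hshad ε hε
  obtain ⟨η, hη, hηδ, hηε⟩ : ∃ η > 0, 2 * η ≤ δ ∧ η ≤ ε :=
    ⟨min (δ / 2) ε, by positivity, by linarith [min_le_left (δ / 2) ε], min_le_right _ _⟩
  have hball : ∀ w : X, ∀ a ∈ ball w η, ∀ b ∈ ball w η, dist a b ≤ δ := fun w a ha b hb =>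
    (dist_triangle_right a b w).trans (by linarith [mem_ball.mp ha, mem_ball.mp hb])
  have hnear : ∀ w : X, ∀ a ∈ ball w η, closedBall a ε ⊆ ball w (2 * ε) := fun w a ha =>
    closedBall_subset_ball' (by linarith [mem_ball.mp ha])
  obtain ⟨n, hn⟩ := hxy.exists_nonempty_inter_preimage isOpen_ball isOpen_ball
    (mem_ball_self hη) (mem_ball_self hη)
  obtain ⟨m, hm⟩ := hyz.exists_nonempty_inter_preimage isOpen_ball isOpen_ball
    (mem_ball_self hη) (mem_ball_self hη)
  let U : Bool → Set X := fun s => if s then ball x η else ball z η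
  have hseg := pseudoOrbitSeg_of_detour (U := U) (fun s => if s then n else m) hδ.le (hball y)
    (by rintro (_ | _); exacts [hm false true, hn true false])
    (by rintro (_ | _); exacts [hm true true, hn false false])
    (by rintro (_ | _); exacts [hm true false, hn false true])
  refine ⟨_, isIndepSet_setOf_dvd hsh (by rintro (_ | _); exacts [hball z, hball x]) hseg ?_,
    (one_div_pos.mpr (by positivity)).trans_le (one_div_le_lowerDensity_setOf_dvd (by omega))⟩
  rintro (_ | _) a ha
  · exact (hnear z a ha).trans hCz
  · exact (hnear x a ha).trans hAx

lemma plusSet_union_diagonal_subset {Z : Type*} {E : Set (Z × Z)}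
    (hE : ∀ a b c, (a, b) ∈ E → (b, c) ∈ E → (a, c) ∈ E) :
    plusSet (E ∪ diagonal Z) ⊆ E ∪ diagonal Z := by
  rintro ⟨a, b⟩ (hab : Relation.TransGen _ a b)
  induction hab with
  | single h => exact h
  | tail _ hbc ih =>
    simp only [mem_union, mem_diagonal_iff] at ih hbc ⊢
    rcases ih with hab | rfl <;> rcases hbc with hbc | rfl
    · exact .inl (hE _ _ _ hab hbc)
    · exact .inl hab
    · exact .inl hbc
    · exact .inr rfl

lemma gammaIter_zero {X : Type*} [TopologicalSpace X] (E : Set (X × X)) : GammaIter E 0 = E :=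
  Ordinal.limitRecOn_zero _ _ _

lemma gammaIter_subset {X : Type*} [TopologicalSpace X] {E F : Set (X × X)} (hF : IsClosed F)
    (hEF : E ⊆ F) (hΔ : diagonal X ⊆ F) (hplus : plusSet F ⊆ F) (o : Ordinal.{0}) :
    GammaIter E o ⊆ F := by
  induction o using Ordinal.limitRecOn with
  | zero => rwa [gammaIter_zero]
  | add_one o ih =>
    rw [GammaIter, Ordinal.limitRecOn_add_one]
    refine hF.closure_subset_iff.mpr (union_subset (fun p hp => hplus ?_) hΔ)
    exact Relation.TransGen.mono (fun _ _ h => ih h) _ _ hp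
  | limit o ho ih =>
    rw [GammaIter, Ordinal.limitRecOn_limit _ _ _ _ ho]
    exact hF.closure_subset_iff.mpr (iUnion_subset fun b => ih b.1 b.2)

lemma setOf_iePair_eq_univ {X : Type*} [TopologicalSpace X] {T : X → X}
    (h : {p : X × X | IEPair T p} ∪ diagonal X = univ) : {p : X × X | IEPair T p} = univ := by
  have hoff : ∀ {x y : X}, x ≠ y → IEPair T (x, y) := fun {x y} hxy =>
    Or.resolve_right (eq_univ_iff_forall.mp h (x, y)) hxy
  refine eq_univ_of_forall fun ⟨x, y⟩ => ?_
  obtain rfl | hxy := eq_or_ne x y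
  · by_cases hw : ∃ w, w ≠ x
    · obtain ⟨w, hw⟩ := hw
      exact (hoff hw.symm).self_left
    · exact iePair_self_of_isFixedPt (not_exists_not.mp hw (T x))
  · exact hoff hxy

theorem stmt3_general {X : Type*} [MetricSpace X] (T : X → X)
    (hshad : HasShadowing T) :
    HasUPE T ↔ HasCPE T := by
  refine ⟨fun h => ⟨0, by simp, by rwa [gammaIter_zero]⟩, fun ⟨α, _, hα⟩ => ?_⟩
  have hplus := plusSet_union_diagonal_subset (E := {p | IEPair T p})
    fun _ _ _ h₁ h₂ => IEPair.trans_of_hasShadowing hshad h₁ h₂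
  have hsub := gammaIter_subset ((isClosed_setOf_iePair T).union isClosed_diagonal)
    subset_union_left subset_union_right hplus α
  exact setOf_iePair_eq_univ (univ_subset_iff.mp (hα ▸ hsub))

/-- A TDS with the shadowing property has UPE if and only if it has CPE. -/
theorem stmt3 {X : Type*} [MetricSpace X] [CompactSpace X] (T : X → X)
    (hT : Continuous T) (hshad : HasShadowing T) :
    HasUPE T ↔ HasCPE T :=
  stmt3_general T hshad
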